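/- arXiv:2002.11609 — 4 statements merged into one kernel-verified Lean document; each statement's English description precedes it below -/
import Mathlib

section
/- For 0 ≤ a < 1 and any real λ with a·e^λ < 1, the moment generating function of the normalized ARMA layer coefficients f, defined by f_p = coefficient of the convolution of the geometric sequence ((1−a)aⁿ)_{n≥0} normalized, satisfies M_f(λ) = (1/(1 − a e^λ)) · Σ_{p=0}^{K−1} ((1−a)/K) e^{λ p d}, and its first derivative at λ = 0 equals a/(1−a) + d(K−1)/2. -/
/-!
With `r = a e^λ`, the coefficient `a^(p - dq)` weighted by `e^{λp}` equals `r^(p - dq) e^{λdq}`,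
so each of the `K` shifted geometric sequences contributes `e^{λdq} / (1 - r)` to the generating
function. The first moment is the derivative at `0` of the product of `1 / (1 - a e^λ)` (value
`1 / (1 - a)`, slope `a / (1 - a)^2`) and of the moving-average part (value `1 - a`, slope
`(1 - a) d (K - 1) / 2`).
-/

open Finset

lemma hasSum_ite_le_pow_sub {r : ℝ} (hr0 : 0 ≤ r) (hr1 : r < 1) (m : ℕ) :
    HasSum (fun p : ℕ => if m ≤ p then r ^ (p - m) else 0) (1 - r)⁻¹ := by
  rw [← hasSum_nat_add_iff' m]
  have hhead : ∑ p ∈ range m, (if m ≤ p then r ^ (p - m) else 0) = 0 :=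
    sum_eq_zero fun p hp => if_neg (by simpa using hp)
  simpa [hhead] using hasSum_geometric_of_lt_one hr0 hr1

lemma hasSum_ite_le_pow_sub_mul_exp {a l : ℝ} (ha0 : 0 ≤ a) (hl : a * Real.exp l < 1)
    (m : ℕ) :
    HasSum (fun p : ℕ => (if m ≤ p then a ^ (p - m) else 0) * Real.exp (l * p))
      (Real.exp (l * m) / (1 - a * Real.exp l)) := by
  have hr0 : 0 ≤ a * Real.exp l := mul_nonneg ha0 (Real.exp_pos l).le
  rw [div_eq_mul_inv]
  refine ((hasSum_ite_le_pow_sub hr0 hl m).mul_left (Real.exp (l * m))).congr_fun fun p => ?_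
  split_ifs with h
  · obtain ⟨n, rfl⟩ := Nat.exists_eq_add_of_le h
    simp only [Nat.add_sub_cancel_left, Nat.cast_add, mul_pow, ← Real.exp_nat_mul]
    rw [mul_add, Real.exp_add]
    ring_nf
  · simp

/-- The coefficients are those of `(a^n)_n` convolved with the filter putting weight `w q` at
lag `m q`. -/
lemma hasSum_filtered_geometric_mul_exp {ι : Type*} (s : Finset ι) (w : ι → ℝ) (m : ι → ℕ)
    {a l : ℝ} (ha0 : 0 ≤ a) (hl : a * Real.exp l < 1) :
    HasSum (fun p : ℕ =>
        (∑ q ∈ s, if m q ≤ p then w q * a ^ (p - m q) else 0) * Real.exp (l * p))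
      (1 / (1 - a * Real.exp l) * ∑ q ∈ s, w q * Real.exp (l * m q)) := by
  have hvalue : 1 / (1 - a * Real.exp l) * ∑ q ∈ s, w q * Real.exp (l * m q)
      = ∑ q ∈ s, w q * (Real.exp (l * m q) / (1 - a * Real.exp l)) := by
    rw [mul_sum]
    exact sum_congr rfl fun q _ => by ring
  rw [hvalue]
  refine (hasSum_sum fun q _ =>
    (hasSum_ite_le_pow_sub_mul_exp ha0 hl (m q)).mul_left (w q)).congr_fun fun p => ?_
  rw [sum_mul]
  refine sum_congr rfl fun q _ => ?_
  split_ifs <;> ring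

lemma hasDerivAt_one_div_one_sub_mul_exp {a x : ℝ} (hx : a * Real.exp x ≠ 1) :
    HasDerivAt (fun l : ℝ => 1 / (1 - a * Real.exp l))
      (a * Real.exp x / (1 - a * Real.exp x) ^ 2) x := by
  have hden : HasDerivAt (fun l : ℝ => 1 - a * Real.exp l) (-(a * Real.exp x)) x :=
    ((Real.hasDerivAt_exp x).const_mul a).const_sub 1
  simpa [one_div] using hden.fun_inv (sub_ne_zero.2 hx.symm)

lemma hasDerivAt_sum_mul_exp {ι : Type*} (s : Finset ι) (c μ : ι → ℝ) (x : ℝ) :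
    HasDerivAt (fun l : ℝ => ∑ i ∈ s, c i * Real.exp (l * μ i))
      (∑ i ∈ s, c i * μ i * Real.exp (x * μ i)) x := by
  refine HasDerivAt.fun_sum fun i _ => ?_
  have := (((hasDerivAt_id x).mul_const (μ i)).exp).const_mul (c i)
  simpa [mul_comm, mul_left_comm, mul_assoc] using this

lemma sum_range_natCast (n : ℕ) : ∑ p ∈ range n, (p : ℝ) = n * (n - 1) / 2 := by
  induction n with
  | zero => simp
  | succ n ih => rw [sum_range_succ, ih]; push_cast; ring

theorem arma_mgf_and_first_moment_general
    (a : ℝ) (ha0 : 0 ≤ a) (ha1 : a < 1)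
    (d K : ℕ) (hK : 1 ≤ K)
    (f : ℕ → ℝ)
    (hf : ∀ p : ℕ, f p = ∑ q ∈ Finset.range K,
      if d * q ≤ p then ((1 - a) / K) * a ^ (p - d * q) else 0) :
    (∀ l : ℝ, a * Real.exp l < 1 →
      ∑' p : ℕ, f p * Real.exp (l * p)
        = (1 / (1 - a * Real.exp l))
            * ∑ p ∈ Finset.range K, ((1 - a) / K) * Real.exp (l * (p * d)))
    ∧ deriv (fun l : ℝ => (1 / (1 - a * Real.exp l))
            * ∑ p ∈ Finset.range K, ((1 - a) / K) * Real.exp (l * (p * d))) 0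
        = a / (1 - a) + (d : ℝ) * ((K : ℝ) - 1) / 2 := by
  have hK0 : (K : ℝ) ≠ 0 := Nat.cast_ne_zero.2 (by omega)
  have h1a : 1 - a ≠ 0 := by linarith
  constructor
  · intro l hl
    simp only [hf]
    convert (hasSum_filtered_geometric_mul_exp (range K) (fun _ => (1 - a) / K) (d * ·)
      ha0 hl).tsum_eq using 4 with q
    push_cast
    ring_nf
  · have hinv := hasDerivAt_one_div_one_sub_mul_exp (x := 0) (a := a) (by simpa using ha1.ne)
    have hma := hasDerivAt_sum_mul_exp (range K) (fun _ => (1 - a) / K) (fun p => p * d) 0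
    rw [(hinv.fun_mul hma).deriv]
    simp only [Real.exp_zero, zero_mul, mul_one, sum_const, card_range, nsmul_eq_mul,
      ← mul_sum, ← sum_mul, sum_range_natCast]
    field_simp

theorem arma_mgf_and_first_moment
    (a : ℝ) (ha0 : 0 ≤ a) (ha1 : a < 1)
    (d K : ℕ) (hd : 1 ≤ d) (hK : 1 ≤ K)
    (f : ℕ → ℝ)
    (hf : ∀ p : ℕ, f p = ∑ q ∈ Finset.range K,
      if d * q ≤ p then ((1 - a) / K) * a ^ (p - d * q) else 0) :
    (∀ l : ℝ, a * Real.exp l < 1 →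
      ∑' p : ℕ, f p * Real.exp (l * p)
        = (1 / (1 - a * Real.exp l))
            * ∑ p ∈ Finset.range K, ((1 - a) / K) * Real.exp (l * (p * d)))
    ∧ deriv (fun l : ℝ => (1 / (1 - a * Real.exp l))
            * ∑ p ∈ Finset.range K, ((1 - a) / K) * Real.exp (l * (p * d))) 0
        = a / (1 - a) + (d : ℝ) * ((K : ℝ) - 1) / 2 :=
  arma_mgf_and_first_moment_general a ha0 ha1 d K hK f hf
end

section
/- Let a₋₁, a₁ be real numbers and F(z) = a₋₁ z² + z + a₁ with a₋₁ ≠ 0 having (possibly complex) roots z₁, z₂. If |a₋₁ + a₁| < 1 then the roots are real and satisfy (after ordering) |z₁| < 1 < |z₂|; conversely, if both roots are real with |z₁| < 1 < |z₂|, then |a₋₁ + a₁| < 1. -/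
/-!
Evaluating `F z = a (z - x) (z - y)` at `z = ±1` gives
`F 1 * F (-1) = (a + c)² - 1 = a² (1 - x²) (1 - y²)`, so `|a + c| < 1` exactly when one root lies
inside and the other outside the unit circle. Real roots exist in that case because the
discriminant `1 - 4ac = 1 - (a + c)² + (a - c)²` is then positive.
-/

theorem quadratic_eq_mul_sub_mul_sub {K : Type*} [Field K] [NeZero (2 : K)] {a b c s : K}
    (ha : a ≠ 0) (h : discrim a b c = s * s) (z : K) :
    a * z ^ 2 + b * z + c = a * (z - (-b + s) / (2 * a)) * (z - (-b - s) / (2 * a)) := by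
  rw [discrim] at h
  field_simp
  linear_combination (-1 : K) * h

theorem exists_quadratic_eq_mul_sub_mul_sub {a b c : ℝ} (ha : a ≠ 0) (h : 0 ≤ discrim a b c) :
    ∃ x y : ℝ, ∀ z, a * z ^ 2 + b * z + c = a * (z - x) * (z - y) :=
  ⟨_, _, quadratic_eq_mul_sub_mul_sub ha (Real.mul_self_sqrt h).symm⟩

theorem discrim_nonneg_of_abs_add_lt_one {a c : ℝ} (h : |a + c| < 1) : 0 ≤ discrim a 1 c := by
  have hsq : (a + c) ^ 2 < 1 := (sq_lt_one_iff_abs_lt_one _).mpr h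
  rw [discrim]
  nlinarith [sq_nonneg (a - c)]

theorem sq_add_sub_one_eq_of_quadratic_eq {R : Type*} [CommRing R] {a c x y : R}
    (hF : ∀ z, a * z ^ 2 + z + c = a * (z - x) * (z - y)) :
    (a + c) ^ 2 - 1 = a ^ 2 * ((1 - x ^ 2) * (1 - y ^ 2)) := by
  linear_combination (a - 1 + c) * hF 1 + (a * (1 - x) * (1 - y)) * hF (-1)

theorem one_sub_sq_mul_one_sub_sq_neg_iff {α : Type*} [Ring α] [LinearOrder α]
    [IsStrictOrderedRing α] {x y : α} :
    (1 - x ^ 2) * (1 - y ^ 2) < 0 ↔ (|x| < 1 ∧ 1 < |y|) ∨ (|y| < 1 ∧ 1 < |x|) := by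
  simp only [mul_neg_iff, sub_pos, sub_neg, sq_lt_one_iff_abs_lt_one, one_lt_sq_iff_one_lt_abs]
  tauto

theorem stability_iff_roots_straddle_unit_circle
    (am1 a1 : ℝ) (h : am1 ≠ 0) :
    |am1 + a1| < 1 ↔
      ∃ z₁ z₂ : ℝ,
        (∀ z : ℝ, am1 * z ^ 2 + z + a1 = am1 * (z - z₁) * (z - z₂))
        ∧ |z₁| < 1 ∧ 1 < |z₂| := by
  constructor
  · intro hab
    obtain ⟨x, y, hF⟩ :=
      exists_quadratic_eq_mul_sub_mul_sub h (discrim_nonneg_of_abs_add_lt_one hab)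
    simp only [one_mul] at hF
    have hprod : am1 ^ 2 * ((1 - x ^ 2) * (1 - y ^ 2)) < 0 := by
      rw [← sq_add_sub_one_eq_of_quadratic_eq hF, sub_neg, sq_lt_one_iff_abs_lt_one]
      exact hab
    rcases one_sub_sq_mul_one_sub_sq_neg_iff.mp (neg_of_mul_neg_right hprod (sq_nonneg am1)) with
      ⟨hx, hy⟩ | ⟨hy, hx⟩
    · exact ⟨x, y, hF, hx, hy⟩
    · exact ⟨y, x, fun z => by rw [hF]; ring, hy, hx⟩
  · rintro ⟨z₁, z₂, hF, h₁, h₂⟩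
    rw [← sq_lt_one_iff_abs_lt_one, ← sub_neg, sq_add_sub_one_eq_of_quadratic_eq hF]
    exact mul_neg_of_pos_of_neg (sq_pos_of_ne_zero h)
      (one_sub_sq_mul_one_sub_sq_neg_iff.mpr (.inl ⟨h₁, h₂⟩))
end

section
/- For a one-channel 1D ARMA model a ∗ y = w ∗ x on ℤ/Nℤ (circular convolutions) with invertible a (all DFT coefficients nonzero), the gradient of a scalar loss L with respect to x satisfies a^T ∗ (∇_x L) = w^T ∗ (∇_y L), where f^T is the index-reversed sequence and ∇_y L is the gradient with respect to y. -/
/-!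
Write `A`, `W` for the circulant matrices of `a`, `w` and `J` for the Jacobian of `x ↦ y`.
Differentiating `A y = W x` gives `A J = W`, and the chain rule gives `∇ₓL = Jᵀ ∇_yL`, so the
claim `Aᵀ Jᵀ ∇_yL = Wᵀ ∇_yL` follows from `J A = W`. Circulant matrices commute, so
`A (J A) = W A = A W`, and `A` can be cancelled: it is invertible because, by the convolution
theorem, the DFT turns it into multiplication by the DFT of `a`, which has no zeros.
-/

/-- Discrete Fourier transform on `ZMod N` (of a real sequence). -/
noncomputable def dftR (N : ℕ) [NeZero N] (f : ZMod N → ℝ) (k : ZMod N) : ℂ :=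
  ∑ n : ZMod N, (f n : ℂ) * Complex.exp (-2 * Real.pi * Complex.I * n.val * k.val / N)

/-- Circular convolution of real sequences on `ZMod N`. -/
noncomputable def cconvR (N : ℕ) [NeZero N] (f g : ZMod N → ℝ) (i : ZMod N) : ℝ :=
  ∑ n : ZMod N, f n * g (i - n)

open Matrix ZMod

theorem mul_eq_of_mul_eq_of_commute {M : Type*} [Monoid M] {a b c : M} (ha : IsUnit a)
    (hac : Commute a c) (h : a * b = c) : b * a = c :=
  ha.mul_left_cancel (by rw [← mul_assoc, h, hac.eq])

section Jacobian

variable {𝕜 n : Type*} [NontriviallyNormedField 𝕜] [Fintype n] [DecidableEq n]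

theorem mul_toMatrix'_fderiv [CompleteSpace 𝕜] {A B : Matrix n n 𝕜} {Y : (n → 𝕜) → n → 𝕜}
    (hY : ∀ x, A *ᵥ Y x = B *ᵥ x) {x : n → 𝕜} (hd : DifferentiableAt 𝕜 Y x) :
    A * LinearMap.toMatrix' (fderiv 𝕜 Y x : (n → 𝕜) →ₗ[𝕜] n → 𝕜) = B := by
  have hAY := A.mulVecLin.toContinuousLinearMap.hasFDerivAt.comp x hd.hasFDerivAt
  rw [show ⇑A.mulVecLin.toContinuousLinearMap ∘ Y = ⇑B.mulVecLin.toContinuousLinearMap from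
    funext hY] at hAY
  have := congrArg (fun L : (n → 𝕜) →L[𝕜] n → 𝕜 => LinearMap.toMatrix' (L : (n → 𝕜) →ₗ[𝕜] n → 𝕜))
    (hAY.unique B.mulVecLin.toContinuousLinearMap.hasFDerivAt)
  simpa [LinearMap.toMatrix'_comp, ← Matrix.toLin'_apply'] using this

theorem toMatrix'_fderiv_apply {Y : (n → 𝕜) → n → 𝕜} {x : n → 𝕜}
    (hd : ∀ j, DifferentiableAt 𝕜 (fun x' => Y x' j) x) (j i : n) :
    LinearMap.toMatrix' (fderiv 𝕜 Y x : (n → 𝕜) →ₗ[𝕜] n → 𝕜) j i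
      = fderiv 𝕜 (fun x' => Y x' j) x (Pi.single i 1) := by
  rw [LinearMap.toMatrix'_apply, fderiv_pi hd]
  rfl

end Jacobian

section Circulant

variable {N : ℕ} [NeZero N]

theorem cconvR_eq_circulant_mulVec (f g : ZMod N → ℝ) : cconvR N f g = circulant f *ᵥ g := by
  funext i
  refine Fintype.sum_equiv (Equiv.subLeft i) _ _ fun n => ?_
  simp [circulant_apply]

theorem dft_circulant_mulVec (f g : ZMod N → ℂ) : 𝓕 (circulant f *ᵥ g) = 𝓕 f * 𝓕 g := by
  funext k
  simp only [dft_apply, Pi.mul_apply, smul_eq_mul, mulVec, dotProduct, circulant_apply,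
    Finset.mul_sum, Finset.sum_mul]
  rw [Finset.sum_comm]
  refine Finset.sum_congr rfl fun j _ =>
    (Fintype.sum_equiv (Equiv.addRight j) _ _ fun i => ?_).symm
  simp only [Equiv.coe_addRight, add_sub_cancel_right, add_mul, neg_add, AddChar.map_add_eq_mul]
  ring

theorem dftR_eq_dft (f : ZMod N → ℝ) : dftR N f = 𝓕 (fun n => (f n : ℂ)) := by
  funext k
  refine Finset.sum_congr rfl fun n _ => ?_
  have : -(n * k) = Int.cast (-(n.val * k.val : ℤ)) := by push_cast; simp
  rw [smul_eq_mul, mul_comm, this, stdAddChar_coe]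
  congr 2
  push_cast
  ring

theorem dftR_circulant_mulVec (f g : ZMod N → ℝ) :
    dftR N (circulant f *ᵥ g) = dftR N f * dftR N g := by
  have : (fun n => ((circulant f *ᵥ g) n : ℂ)) =
      circulant (fun n => (f n : ℂ)) *ᵥ fun n => (g n : ℂ) := by
    funext n
    simp [mulVec, dotProduct, circulant_apply]
  simp only [dftR_eq_dft, this, dft_circulant_mulVec]

theorem isUnit_circulant_of_dftR_ne_zero {a : ZMod N → ℝ} (ha : ∀ k, dftR N a k ≠ 0) :
    IsUnit (circulant a) := by
  rw [← mulVec_injective_iff_isUnit]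
  intro u v huv
  have hprod : dftR N a * dftR N (u - v) = 0 := by
    rw [← dftR_circulant_mulVec, mulVec_sub, huv, sub_self]
    funext k
    simp [dftR]
  have hdft : 𝓕 (fun n => ((u - v) n : ℂ)) = 0 := by
    rw [← dftR_eq_dft]
    funext k
    exact (mul_eq_zero.1 (congrFun hprod k)).resolve_left (ha k)
  rw [LinearEquiv.map_eq_zero_iff] at hdft
  funext n
  simpa [sub_eq_zero] using congrFun hdft n

end Circulant

theorem arma_backprop_input_gradient
    (N : ℕ) [NeZero N] (a w : ZMod N → ℝ)
    (hA : ∀ k, dftR N a k ≠ 0)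
    (Y : (ZMod N → ℝ) → ZMod N → ℝ)
    (hY : ∀ x i, cconvR N a (Y x) i = cconvR N w x i)
    (hdiff : ∀ j : ZMod N, Differentiable ℝ (fun x' : ZMod N → ℝ => Y x' j))
    (x gy gx : ZMod N → ℝ)
    (hgx : ∀ i : ZMod N,
      gx i = ∑ j : ZMod N,
        fderiv ℝ (fun x' : ZMod N → ℝ => Y x' j) x (Pi.single i 1) * gy j) :
    ∀ i : ZMod N,
      cconvR N (fun j => a (-j)) gx i = cconvR N (fun j => w (-j)) gy i := by
  set J := LinearMap.toMatrix' (fderiv ℝ Y x : (ZMod N → ℝ) →ₗ[ℝ] ZMod N → ℝ)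
  have hAJ : circulant a * J = circulant w := by
    refine mul_toMatrix'_fderiv (fun x' => ?_) (differentiableAt_pi.2 fun j => (hdiff j) x)
    simpa only [cconvR_eq_circulant_mulVec] using funext (hY x')
  have hJA : J * circulant a = circulant w :=
    mul_eq_of_mul_eq_of_commute (isUnit_circulant_of_dftR_ne_zero hA)
      (circulant_mul_comm a w) hAJ
  have hgx' : gx = Jᵀ *ᵥ gy := by
    funext i
    simp only [hgx i, mulVec, dotProduct, transpose_apply, J,
      toMatrix'_fderiv_apply fun j => (hdiff j) x]
  intro i
  rw [cconvR_eq_circulant_mulVec, cconvR_eq_circulant_mulVec, ← transpose_circulant,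
    ← transpose_circulant, hgx', mulVec_mulVec, ← transpose_mul, hJA]
end

section
/- Let a be a bi-infinite absolutely summable sequence whose Z-transform A(z) = a₋₁ z + 1 + a₁ z⁻¹ (with a₋₁ a₁ ≠ 0) has F(z) = zA(z) with real roots z₁, z₂ satisfying |z₁| < 1 < |z₂|. Then there exists an absolutely summable sequence h with (a ∗ h)_i = δ_{i0}, and consequently the map x ↦ h ∗ x is BIBO stable: for all bounded x, sup_i |(h ∗ x)_i| ≤ (Σ_i |h_i|)·sup_i |x_i|. -/
/-!
Partial fractions: if `a₋₁ z² + z + a₁ = a₋₁ (z - z₁)(z - z₂)`, the sequence `g` equal to `z₁ ^ i`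
for `i ≥ 0` and to `z₂ ^ i` for `i < 0` is annihilated by the three-term filter `a` away from `0`,
because each of the two geometric pieces is built from a root; at `i = 0` the two pieces meet and
the filter produces `a₋₁ (z₁ - z₂)`. Hence `h = g / (a₋₁ (z₁ - z₂))` inverts `a`, and `|z₁| < 1 < |z₂|`
makes both geometric tails, hence `h`, absolutely summable.
-/

section QuadraticRoots

variable {α β r s : ℝ}

theorem mul_add_roots_eq_neg_one (hfact : ∀ z : ℝ, α * z ^ 2 + z + β = α * (z - r) * (z - s)) :
    α * (r + s) = -1 := by
  linear_combination (hfact 1 - hfact (-1)) / 2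

theorem mul_mul_roots_eq (hfact : ∀ z : ℝ, α * z ^ 2 + z + β = α * (z - r) * (z - s)) :
    α * r * s = β := by
  linear_combination -hfact 0

theorem zpow_three_term_eq_zero (hr : α * r ^ 2 + r + β = 0) {i : ℤ} (hi : r ≠ 0 ∨ 0 < i) :
    α * r ^ (i + 1) + r ^ i + β * r ^ (i - 1) = 0 := by
  have hsq : r ^ (i + 1) = r ^ (i - 1) * r ^ 2 := by
    rw [show i + 1 = i - 1 + 2 by ring, ← zpow_ofNat]
    exact zpow_add' (hi.imp_right fun hi => Or.inl (by omega))
  have hone : r ^ i = r ^ (i - 1) * r := by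
    simpa using zpow_add' (a := r) (m := i - 1) (n := 1)
      (hi.imp_right fun hi => Or.inl (by omega))
  rw [hsq, hone]
  linear_combination r ^ (i - 1) * hr

end QuadraticRoots

noncomputable def twoSidedGeom (r s : ℝ) (i : ℤ) : ℝ := if 0 ≤ i then r ^ i else s ^ i

theorem twoSidedGeom_of_nonneg (r s : ℝ) {i : ℤ} (hi : 0 ≤ i) : twoSidedGeom r s i = r ^ i :=
  if_pos hi

theorem twoSidedGeom_of_nonpos (r s : ℝ) {i : ℤ} (hi : i ≤ 0) : twoSidedGeom r s i = s ^ i := by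
  rcases hi.lt_or_eq with hi | rfl
  · exact if_neg hi.not_ge
  · simp [twoSidedGeom]

theorem summable_abs_twoSidedGeom {r s : ℝ} (hr : |r| < 1) (hs : 1 < |s|) :
    Summable fun i => |twoSidedGeom r s i| := by
  refine Summable.of_nat_of_neg ?_ ?_
  · simpa [twoSidedGeom_of_nonneg, abs_pow] using summable_geometric_of_lt_one (abs_nonneg r) hr
  · simpa [twoSidedGeom_of_nonpos, abs_inv, abs_pow, inv_pow] using
      summable_geometric_of_lt_one (inv_nonneg.2 (abs_nonneg s)) (inv_lt_one_of_one_lt₀ hs)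

theorem twoSidedGeom_three_term {α β r s : ℝ}
    (hfact : ∀ z : ℝ, α * z ^ 2 + z + β = α * (z - r) * (z - s)) (hs : s ≠ 0) (i : ℤ) :
    α * twoSidedGeom r s (i + 1) + twoSidedGeom r s i + β * twoSidedGeom r s (i - 1)
      = if i = 0 then α * (r - s) else 0 := by
  rcases lt_trichotomy i 0 with hi | rfl | hi
  · rw [if_neg hi.ne, twoSidedGeom_of_nonpos _ _ (by omega), twoSidedGeom_of_nonpos _ _ hi.le,
      twoSidedGeom_of_nonpos _ _ (by omega)]
    exact zpow_three_term_eq_zero (by linear_combination hfact s) (Or.inl hs)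
  · rw [if_pos rfl, twoSidedGeom_of_nonneg _ _ (by norm_num), twoSidedGeom_of_nonneg _ _ le_rfl,
      twoSidedGeom_of_nonpos _ _ (by norm_num)]
    -- `β / s = α r` and `1 = -α (r + s)` by Vieta
    simp only [zero_add, zero_sub, zpow_one, zpow_zero, zpow_neg_one, ← mul_mul_roots_eq hfact]
    rw [mul_inv_cancel_right₀ hs]
    linear_combination mul_add_roots_eq_neg_one hfact
  · rw [if_neg hi.ne', twoSidedGeom_of_nonneg _ _ (by omega), twoSidedGeom_of_nonneg _ _ hi.le,
      twoSidedGeom_of_nonneg _ _ (by omega)]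
    exact zpow_three_term_eq_zero (by linear_combination hfact r) (Or.inr hi)

theorem tsum_mul_sub_eq_of_support_three {R : Type*} [Semiring R] [TopologicalSpace R]
    {a : ℤ → R} (hsupp : ∀ i : ℤ, i ≠ -1 → i ≠ 0 → i ≠ 1 → a i = 0) (h : ℤ → R) (i : ℤ) :
    ∑' p : ℤ, a p * h (i - p) = a (-1) * h (i + 1) + a 0 * h i + a 1 * h (i - 1) := by
  rw [tsum_eq_sum (s := {-1, 0, 1}) fun p hp => by
    simp only [Finset.mem_insert, Finset.mem_singleton, not_or] at hp
    rw [hsupp p hp.1 hp.2.1 hp.2.2, zero_mul]]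
  simp [add_assoc]

theorem abs_tsum_mul_le_of_abs_le {ι : Type*} {h x : ι → ℝ} {B : ℝ}
    (hh : Summable fun i => |h i|) (hx : ∀ i, |x i| ≤ B) :
    |∑' i, h i * x i| ≤ (∑' i, |h i|) * B := by
  rw [← Real.norm_eq_abs]
  refine tsum_of_norm_bounded (hh.hasSum.mul_right B) fun i => ?_
  rw [Real.norm_eq_abs, abs_mul]
  exact mul_le_mul_of_nonneg_left (hx i) (abs_nonneg (h i))

theorem length_three_ar_filter_has_summable_inverse_and_is_bibo_general
    (a : ℤ → ℝ) (ha0 : a 0 = 1)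
    (hsupp : ∀ i : ℤ, i ≠ -1 → i ≠ 0 → i ≠ 1 → a i = 0)
    (z₁ z₂ : ℝ)
    (hfact : ∀ z : ℝ, a (-1) * z ^ 2 + z + a 1 = a (-1) * (z - z₁) * (z - z₂))
    (hz₁ : |z₁| < 1) (hz₂ : 1 < |z₂|) :
    ∃ h : ℤ → ℝ, Summable (fun i : ℤ => |h i|)
      ∧ (∀ i : ℤ, ∑' p : ℤ, a p * h (i - p) = if i = 0 then 1 else 0)
      ∧ ∀ (x : ℤ → ℝ) (B : ℝ), (∀ i, |x i| ≤ B) →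
          ∀ i : ℤ, |∑' p : ℤ, h p * x (i - p)| ≤ (∑' j : ℤ, |h j|) * B := by
  have hz₂0 : z₂ ≠ 0 := by rintro rfl; norm_num at hz₂
  have hden : a (-1) * (z₁ - z₂) ≠ 0 := mul_ne_zero
    (left_ne_zero_of_mul_eq_one (b := -(z₁ + z₂)) <| by
      linear_combination -mul_add_roots_eq_neg_one hfact)
    (sub_ne_zero.2 fun h => by rw [h] at hz₁; linarith)
  set c := (a (-1) * (z₁ - z₂))⁻¹
  have hsum : Summable fun i => |c * twoSidedGeom z₁ z₂ i| := by
    simpa only [abs_mul] using (summable_abs_twoSidedGeom hz₁ hz₂).mul_left |c|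
  refine ⟨fun i => c * twoSidedGeom z₁ z₂ i, hsum, fun i => ?_,
    fun x B hx i => abs_tsum_mul_le_of_abs_le hsum fun p => hx (i - p)⟩
  have hrec := twoSidedGeom_three_term hfact hz₂0 i
  rw [tsum_mul_sub_eq_of_support_three hsupp (fun i => c * twoSidedGeom z₁ z₂ i), ha0]
  split_ifs at hrec ⊢
  · linear_combination c * hrec + inv_mul_cancel₀ hden
  · linear_combination c * hrec

theorem length_three_ar_filter_has_summable_inverse_and_is_bibo
    (a : ℤ → ℝ) (ha0 : a 0 = 1)
    (hsupp : ∀ i : ℤ, i ≠ -1 → i ≠ 0 → i ≠ 1 → a i = 0)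
    (ham1 : a (-1) ≠ 0) (ha1 : a 1 ≠ 0)
    (z₁ z₂ : ℝ)
    (hfact : ∀ z : ℝ, a (-1) * z ^ 2 + z + a 1 = a (-1) * (z - z₁) * (z - z₂))
    (hz₁ : |z₁| < 1) (hz₂ : 1 < |z₂|) :
    ∃ h : ℤ → ℝ, Summable (fun i : ℤ => |h i|)
      ∧ (∀ i : ℤ, ∑' p : ℤ, a p * h (i - p) = if i = 0 then 1 else 0)
      ∧ ∀ (x : ℤ → ℝ) (B : ℝ), (∀ i, |x i| ≤ B) →
          ∀ i : ℤ, |∑' p : ℤ, h p * x (i - p)| ≤ (∑' j : ℤ, |h j|) * B :=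
  length_three_ar_filter_has_summable_inverse_and_is_bibo_general a ha0 hsupp z₁ z₂ hfact hz₁ hz₂
end
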